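/- Let n be a positive integer, let λ₁, …, λₙ be distinct points of the open unit disc 𝔻 ⊆ ℂ, and let z₁, …, zₙ ∈ ℂ. There exists a holomorphic function φ : 𝔻 → ℂ with φ(λᵢ) = zᵢ for each i and sup_{λ∈𝔻} |φ(λ)| ≤ 1 if and only if the n×n matrix whose (i,j) entry is (1 − zᵢ·conj(zⱼ))/(1 − λᵢ·conj(λⱼ)) is positive semidefinite. -/

import Mathlib

/-!
Schur's algorithm. Both sides force `‖z i‖ ≤ 1`. If some `‖z k‖ = 1`, both sides say that `z` is
constant: by the maximum modulus principle, resp. because a positive semidefinite matrix with a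
vanishing diagonal entry vanishes on that column.

Otherwise compose with the disc automorphisms `w ↦ (w - a) / (1 - conj a * w)` to reach
`lam 0 = z 0 = 0`. They change neither side: the Pick matrix only undergoes a diagonal congruence
and a positive rescaling. Now, by Schwarz's lemma, the interpolants are exactly the functions
`w * χ w` with `χ` interpolating `z i / lam i` at the remaining nodes, while the Pick matrix is the
all-ones matrix plus the Pick matrix of these new data, congruent by `diagonal lam` and bordered by
zeros; since its first row consists of ones, it is positive semidefinite iff the new Pick matrix is.
Induct on the number of nodes.
-/

open Complex Metric
open scoped ComplexOrder ComplexConjugate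

namespace NevanlinnaPick

open Matrix

lemma one_sub_mul_ne_zero {x y : ℂ} (hx : ‖x‖ < 1) (hy : ‖y‖ ≤ 1) : 1 - x * y ≠ 0 := by
  rw [sub_ne_zero]
  intro h
  have : ‖x * y‖ < 1 := by
    rw [norm_mul]
    nlinarith [norm_nonneg x, norm_nonneg y]
  simp [← h] at this

noncomputable def mobius (a w : ℂ) : ℂ := (w - a) / (1 - conj a * w)

lemma mobius_self (a : ℂ) : mobius a a = 0 := by simp [mobius]

lemma one_sub_mobius_mul_conj_mobius {a x y : ℂ} (hx : 1 - conj a * x ≠ 0)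
    (hy : 1 - a * conj y ≠ 0) :
    1 - mobius a x * conj (mobius a y)
      = (1 - a * conj a) * (1 - x * conj y) / ((1 - conj a * x) * (1 - a * conj y)) := by
  have hx' : 1 - x * conj a ≠ 0 := by rwa [mul_comm]
  simp only [mobius, map_div₀, map_sub, map_mul, map_one, conj_conj]
  field_simp
  ring

lemma one_sub_mobius_mul_conj_mobius_div {a b x y u v : ℂ} (hx : 1 - conj a * x ≠ 0)
    (hy : 1 - conj a * y ≠ 0) (hu : 1 - conj b * u ≠ 0) (hv : 1 - conj b * v ≠ 0)
    (ha : 1 - a * conj a ≠ 0) :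
    (1 - mobius b u * conj (mobius b v)) / (1 - mobius a x * conj (mobius a y)) =
      (1 - b * conj b) / (1 - a * conj a) * ((1 - conj a * x) / (1 - conj b * u) *
        ((1 - u * conj v) / (1 - x * conj y)) * conj ((1 - conj a * y) / (1 - conj b * v))) := by
  have hy' : 1 - a * conj y ≠ 0 := by simpa using (map_ne_zero conj).2 hy
  have hv' : 1 - b * conj v ≠ 0 := by simpa using (map_ne_zero conj).2 hv
  rw [one_sub_mobius_mul_conj_mobius hx hy', one_sub_mobius_mul_conj_mobius hu hv']
  simp only [map_div₀, map_sub, map_mul, map_one, conj_conj]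
  field_simp

lemma sq_norm_one_sub_conj_mul_sub_sq_norm_sub (a w : ℂ) :
    ‖1 - conj a * w‖ ^ 2 - ‖w - a‖ ^ 2 = (1 - ‖a‖ ^ 2) * (1 - ‖w‖ ^ 2) := by
  apply ofReal_injective
  push_cast
  simp only [← mul_conj', map_sub, map_mul, map_one, conj_conj]
  ring

lemma norm_mobius_le_one {a w : ℂ} (ha : ‖a‖ < 1) (hw : ‖w‖ ≤ 1) : ‖mobius a w‖ ≤ 1 := by
  have hd := one_sub_mul_ne_zero (by rwa [norm_conj]) hw (x := conj a)
  rw [mobius, norm_div, div_le_one (norm_pos_iff.2 hd), ← sq_le_sq₀ (norm_nonneg _) (norm_nonneg _),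
    ← sub_nonneg, sq_norm_one_sub_conj_mul_sub_sq_norm_sub]
  apply mul_nonneg <;> nlinarith [norm_nonneg a, norm_nonneg w]

lemma norm_mobius_lt_one {a w : ℂ} (ha : ‖a‖ < 1) (hw : ‖w‖ < 1) : ‖mobius a w‖ < 1 := by
  have hd := one_sub_mul_ne_zero (by rwa [norm_conj]) hw.le (x := conj a)
  rw [mobius, norm_div, div_lt_one (norm_pos_iff.2 hd), ← sq_lt_sq₀ (norm_nonneg _) (norm_nonneg _),
    ← sub_pos, sq_norm_one_sub_conj_mul_sub_sq_norm_sub]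
  apply mul_pos <;> nlinarith [norm_nonneg a, norm_nonneg w]

lemma mobius_neg_mobius {a w : ℂ} (ha : ‖a‖ < 1) (hw : ‖w‖ ≤ 1) : mobius (-a) (mobius a w) = w := by
  have hd := one_sub_mul_ne_zero (by rwa [norm_conj]) hw (x := conj a)
  have hd' : 1 - w * conj a ≠ 0 := by rwa [mul_comm]
  have ha' : 1 - a * conj a ≠ 0 := one_sub_mul_ne_zero ha (by rw [norm_conj]; exact ha.le)
  rw [mobius, mobius, map_neg]
  field_simp
  linear_combination w * mul_inv_cancel₀ ha'

lemma differentiableOn_mobius {a : ℂ} (ha : ‖a‖ < 1) :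
    DifferentiableOn ℂ (mobius a) (closedBall 0 1) :=
  (differentiableOn_id.sub_const a).div ((differentiableOn_const 1).sub
    (differentiableOn_id.const_mul _)) fun w hw =>
    one_sub_mul_ne_zero (by rwa [norm_conj]) (mem_closedBall_zero_iff.1 hw)

lemma mapsTo_mobius_ball {a : ℂ} (ha : ‖a‖ < 1) : Set.MapsTo (mobius a) (ball 0 1) (ball 0 1) :=
  fun _ hw => mem_ball_zero_iff.2 (norm_mobius_lt_one ha (mem_ball_zero_iff.1 hw))


lemma mobius_neg_comp_mobius_comp {ι : Type*} {a : ℂ} (ha : ‖a‖ < 1) {f : ι → ℂ}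
    (hf : ∀ i, ‖f i‖ ≤ 1) : mobius (-a) ∘ (mobius a ∘ f) = f :=
  funext fun i => mobius_neg_mobius ha (hf i)

def IsSchurInterpolable {ι : Type*} (lam z : ι → ℂ) : Prop :=
  ∃ φ : ℂ → ℂ, DifferentiableOn ℂ φ (ball 0 1) ∧ (∀ i, φ (lam i) = z i) ∧
    ∀ w ∈ ball (0 : ℂ) 1, ‖φ w‖ ≤ 1

section Interpolation

variable {ι : Type*} {lam z : ι → ℂ}

lemma IsSchurInterpolable.norm_le_one (h : IsSchurInterpolable lam z)
    (hlam : ∀ i, ‖lam i‖ < 1) (i : ι) : ‖z i‖ ≤ 1 := by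
  obtain ⟨φ, -, hφz, hφ⟩ := h
  exact hφz i ▸ hφ _ (mem_ball_zero_iff.2 (hlam i))

lemma IsSchurInterpolable.mobius_comp (h : IsSchurInterpolable lam z) {a b : ℂ} (ha : ‖a‖ < 1)
    (hb : ‖b‖ < 1) (hlam : ∀ i, ‖lam i‖ ≤ 1) :
    IsSchurInterpolable (mobius a ∘ lam) (mobius b ∘ z) := by
  obtain ⟨φ, hφd, hφz, hφ⟩ := h
  have ha' : ‖-a‖ < 1 := by rwa [norm_neg]
  have hφmaps : Set.MapsTo φ (ball 0 1) (closedBall 0 1) := fun w hw =>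
    mem_closedBall_zero_iff.2 (hφ w hw)
  refine ⟨mobius b ∘ φ ∘ mobius (-a), ?_, fun i => ?_, fun w hw => ?_⟩
  · exact (differentiableOn_mobius hb).comp
      (hφd.comp ((differentiableOn_mobius ha').mono ball_subset_closedBall)
        (mapsTo_mobius_ball ha'))
      (hφmaps.comp (mapsTo_mobius_ball ha'))
  · simp [mobius_neg_mobius ha (hlam i), hφz]
  · exact norm_mobius_le_one hb (hφ _ (mapsTo_mobius_ball ha' hw))

lemma isSchurInterpolable_mobius_comp_iff {a b : ℂ} (ha : ‖a‖ < 1) (hb : ‖b‖ < 1)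
    (hlam : ∀ i, ‖lam i‖ ≤ 1) (hz : ∀ i, ‖z i‖ ≤ 1) :
    IsSchurInterpolable (mobius a ∘ lam) (mobius b ∘ z) ↔ IsSchurInterpolable lam z := by
  refine ⟨fun h => ?_, fun h => h.mobius_comp ha hb hlam⟩
  rw [← mobius_neg_comp_mobius_comp ha hlam, ← mobius_neg_comp_mobius_comp hb hz]
  exact h.mobius_comp (by rwa [norm_neg]) (by rwa [norm_neg])
    fun i => norm_mobius_le_one ha (hlam i)

lemma isSchurInterpolable_iff_forall_eq_of_norm_eq_one (hlam : ∀ i, ‖lam i‖ < 1) {k : ι}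
    (hk : ‖z k‖ = 1) : IsSchurInterpolable lam z ↔ ∀ i, z i = z k := by
  constructor
  · rintro ⟨φ, hφd, hφz, hφ⟩ i
    have hmax : IsMaxOn (norm ∘ φ) (ball 0 1) (lam k) := fun w hw => by
      simpa [hφz, hk] using hφ w hw
    have hconst := Complex.eqOn_of_isPreconnected_of_isMaxOn_norm
      (convex_ball (0 : ℂ) 1).isPreconnected isOpen_ball hφd (mem_ball_zero_iff.2 (hlam k)) hmax
    rw [← hφz, ← hφz]
    exact hconst (mem_ball_zero_iff.2 (hlam i))
  · intro h
    exact ⟨fun _ => z k, differentiableOn_const _, fun i => (h i).symm, fun _ _ => hk.le⟩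

end Interpolation

lemma isSchurInterpolable_iff_of_eq_zero {n : ℕ} {lam z : Fin (n + 1) → ℂ} (hlam0 : lam 0 = 0)
    (hz0 : z 0 = 0) (hne : ∀ i : Fin n, lam i.succ ≠ 0) :
    IsSchurInterpolable lam z ↔
      IsSchurInterpolable (fun i : Fin n => lam i.succ) (fun i => z i.succ / lam i.succ) := by
  constructor
  · rintro ⟨φ, hφd, hφz, hφ⟩
    have hφ0 : φ 0 = 0 := by simpa [hlam0, hz0] using hφz 0
    refine ⟨dslope φ 0, (Complex.differentiableOn_dslope (ball_mem_nhds 0 one_pos)).2 hφd,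
      fun i => ?_, fun w hw => ?_⟩
    · rw [dslope_of_ne _ (hne i), slope_def_field, hφz, hφ0, sub_zero, sub_zero]
    · have := Complex.norm_dslope_le_div_of_mapsTo_ball hφd
        (fun u hu => by simpa [hφ0] using hφ u hu) hw
      simpa using this
  · rintro ⟨χ, hχd, hχz, hχ⟩
    refine ⟨fun w => w * χ w, differentiableOn_id.mul hχd, fun i => ?_, fun w hw => ?_⟩
    · cases i using Fin.cases with
      | zero => simp [hlam0, hz0]
      | succ i => exact congrArg (lam i.succ * ·) (hχz i) |>.trans (mul_div_cancel₀ _ (hne i))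
    · rw [norm_mul]
      exact mul_le_one₀ (mem_ball_zero_iff.1 hw).le (norm_nonneg _) (hχ w hw)

section Block

variable {R : Type*} [CommRing R] [StarRing R] {k : ℕ}

lemma star_dotProduct_mulVec_eq_of_apply_zero_eq_one {F : Matrix (Fin (k + 1)) (Fin (k + 1)) R}
    (hrow : ∀ j, F 0 j = 1) (hcol : ∀ i, F i 0 = 1) (x : Fin (k + 1) → R) :
    star x ⬝ᵥ F *ᵥ x = star (∑ i, x i) * ∑ i, x i +
      star (Fin.tail x) ⬝ᵥ (of fun i j : Fin k => F i.succ j.succ - 1) *ᵥ Fin.tail x := by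
  simp only [dotProduct, mulVec, Fin.sum_univ_succ, hrow, hcol, Fin.tail, of_apply, Pi.star_apply,
    star_add, star_sum, one_mul, sub_mul, Finset.sum_sub_distrib, mul_add, add_mul, Finset.mul_sum,
    Finset.sum_mul, Finset.sum_add_distrib, mul_sub]
  rw [Finset.sum_comm (f := fun i j : Fin k => star (x j.succ) * x i.succ)]
  ring

lemma posSemidef_iff_of_apply_zero_eq_one [PartialOrder R] [StarOrderedRing R]
    {F : Matrix (Fin (k + 1)) (Fin (k + 1)) R} (hF : F.IsHermitian) (hrow : ∀ j, F 0 j = 1) :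
    F.PosSemidef ↔ (of fun i j : Fin k => F i.succ j.succ - 1).PosSemidef := by
  have hcol (i : Fin (k + 1)) : F i 0 = 1 := by rw [← hF.apply, hrow, star_one]
  have hG : (of fun i j : Fin k => F i.succ j.succ - 1).IsHermitian :=
    IsHermitian.ext fun i j => by simp [← hF.apply j.succ i.succ]
  simp only [posSemidef_iff_dotProduct_mulVec,
    star_dotProduct_mulVec_eq_of_apply_zero_eq_one hrow hcol, hF, hG, true_and]
  constructor
  · intro h y
    simpa [Fin.sum_cons, Fin.tail_cons] using h (Fin.cons (-∑ i, y i) y)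
  · exact fun h x => add_nonneg (star_mul_self_nonneg _) (h _)

end Block

lemma _root_.Matrix.PosSemidef.apply_eq_zero_of_apply_self_eq_zero {𝕜 n : Type*} [RCLike 𝕜]
    [Fintype n] {A : Matrix n n 𝕜} (hA : A.PosSemidef) {k : n} (hk : A k k = 0)
    (i : n) : A i k = 0 := by
  classical
  have h := (hA.dotProduct_mulVec_zero_iff (Pi.single k 1)).1 (by simpa using hk)
  simpa using congrFun h i

noncomputable def pickMatrix {ι : Type*} (lam z : ι → ℂ) : Matrix ι ι ℂ :=
  Matrix.of fun i j => (1 - z i * conj (z j)) / (1 - lam i * conj (lam j))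

section PickMatrix

variable {ι : Type*} {lam z : ι → ℂ}

lemma isHermitian_pickMatrix (lam z : ι → ℂ) : (pickMatrix lam z).IsHermitian :=
  IsHermitian.ext fun i j => by simp [pickMatrix, mul_comm]

lemma pickMatrix_apply_self (lam z : ι → ℂ) (i : ι) :
    pickMatrix lam z i i = ((1 - ‖z i‖ ^ 2) / (1 - ‖lam i‖ ^ 2) : ℝ) := by
  simp [pickMatrix, mul_conj']

lemma norm_le_one_of_pickMatrix_posSemidef (hP : (pickMatrix lam z).PosSemidef)
    (hlam : ∀ i, ‖lam i‖ < 1) (i : ι) : ‖z i‖ ≤ 1 := by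
  have h := hP.diag_nonneg (i := i)
  rw [pickMatrix_apply_self, zero_le_real] at h
  have hden : 0 < 1 - ‖lam i‖ ^ 2 := by nlinarith [hlam i, norm_nonneg (lam i)]
  have hnum : 0 ≤ 1 - ‖z i‖ ^ 2 := by simpa using (le_div_iff₀ hden).1 h
  exact (sq_le_one_iff₀ (norm_nonneg _)).1 (by linarith)

lemma posSemidef_pickMatrix_mobius_comp [Fintype ι] (hP : (pickMatrix lam z).PosSemidef) {a b : ℂ}
    (ha : ‖a‖ < 1) (hb : ‖b‖ < 1) (hlam : ∀ i, ‖lam i‖ ≤ 1) (hz : ∀ i, ‖z i‖ ≤ 1) :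
    (pickMatrix (mobius a ∘ lam) (mobius b ∘ z)).PosSemidef := by
  classical
  have hca : ‖conj a‖ < 1 := by rwa [norm_conj]
  have hcb : ‖conj b‖ < 1 := by rwa [norm_conj]
  set d : ι → ℂ := fun i => (1 - conj a * lam i) / (1 - conj b * z i)
  have key : pickMatrix (mobius a ∘ lam) (mobius b ∘ z) =
      ((1 - ‖b‖ ^ 2) / (1 - ‖a‖ ^ 2) : ℝ) • (diagonal d * pickMatrix lam z * (diagonal d)ᴴ) := by
    ext i j
    simp only [pickMatrix, Function.comp_apply, of_apply, Matrix.smul_apply, diagonal_conjTranspose,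
      diagonal_mul, mul_diagonal, Pi.star_apply, RCLike.star_def, real_smul, d]
    rw [one_sub_mobius_mul_conj_mobius_div (one_sub_mul_ne_zero hca (hlam i))
      (one_sub_mul_ne_zero hca (hlam j)) (one_sub_mul_ne_zero hcb (hz i))
      (one_sub_mul_ne_zero hcb (hz j)) (one_sub_mul_ne_zero ha (by rw [norm_conj]; exact ha.le))]
    push_cast [mul_conj']
    ring
  rw [key]
  refine (hP.mul_mul_conjTranspose_same _).smul (div_nonneg ?_ ?_) <;>
    nlinarith [norm_nonneg a, norm_nonneg b]

lemma pickMatrix_mobius_comp_posSemidef_iff [Fintype ι] {a b : ℂ} (ha : ‖a‖ < 1) (hb : ‖b‖ < 1)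
    (hlam : ∀ i, ‖lam i‖ ≤ 1) (hz : ∀ i, ‖z i‖ ≤ 1) :
    (pickMatrix (mobius a ∘ lam) (mobius b ∘ z)).PosSemidef ↔ (pickMatrix lam z).PosSemidef := by
  refine ⟨fun h => ?_, fun h => posSemidef_pickMatrix_mobius_comp h ha hb hlam hz⟩
  rw [← mobius_neg_comp_mobius_comp ha hlam, ← mobius_neg_comp_mobius_comp hb hz]
  exact posSemidef_pickMatrix_mobius_comp h (by rwa [norm_neg]) (by rwa [norm_neg])
    (fun i => norm_mobius_le_one ha (hlam i)) fun i => norm_mobius_le_one hb (hz i)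

lemma pickMatrix_posSemidef_iff_forall_eq_of_norm_eq_one [Fintype ι]
    (hlam : ∀ i, ‖lam i‖ < 1) {k : ι} (hk : ‖z k‖ = 1) :
    (pickMatrix lam z).PosSemidef ↔ ∀ i, z i = z k := by
  have hkk : z k * conj (z k) = 1 := by simp [mul_conj', hk]
  constructor
  · intro hP i
    have hcol :=
      hP.apply_eq_zero_of_apply_self_eq_zero (k := k) (by simp [pickMatrix_apply_self, hk]) i
    have hden : 1 - lam i * conj (lam k) ≠ 0 :=
      one_sub_mul_ne_zero (hlam i) (by rw [norm_conj]; exact (hlam k).le)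
    have hik : z i * conj (z k) = z k * conj (z k) := by
      rw [hkk, ← sub_eq_zero, ← neg_eq_zero, neg_sub]
      exact (div_eq_zero_iff.1 hcol).resolve_right hden
    have hk0 : conj (z k) ≠ 0 := by
      rw [← norm_ne_zero_iff, norm_conj, hk]
      exact one_ne_zero
    exact mul_right_cancel₀ hk0 hik
  · intro h
    convert PosSemidef.zero
    ext i j
    simp [pickMatrix, h i, h j, hkk]

end PickMatrix

lemma pickMatrix_posSemidef_iff_of_eq_zero {n : ℕ} {lam z : Fin (n + 1) → ℂ}
    (hlam : ∀ i, ‖lam i‖ < 1) (hlam0 : lam 0 = 0) (hz0 : z 0 = 0)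
    (hne : ∀ i : Fin n, lam i.succ ≠ 0) :
    (pickMatrix lam z).PosSemidef ↔
      (pickMatrix (fun i : Fin n => lam i.succ) (fun i => z i.succ / lam i.succ)).PosSemidef := by
  rw [posSemidef_iff_of_apply_zero_eq_one (isHermitian_pickMatrix lam z)
    (by simp [pickMatrix, hlam0, hz0])]
  have hU : IsUnit (diagonal fun i : Fin n => lam i.succ) :=
    isUnit_diagonal.2 (Pi.isUnit_iff.2 fun i => (hne i).isUnit)
  refine Iff.trans (iff_of_eq (congrArg _ ?_)) hU.posSemidef_star_right_conjugate_iff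
  ext i j
  have hden : 1 - lam i.succ * conj (lam j.succ) ≠ 0 :=
    one_sub_mul_ne_zero (hlam _) (by rw [norm_conj]; exact (hlam _).le)
  have hi := hne i
  have hj : conj (lam j.succ) ≠ 0 := (map_ne_zero _).2 (hne j)
  simp only [pickMatrix, of_apply, star_eq_conjTranspose, diagonal_conjTranspose, diagonal_mul,
    mul_diagonal, Pi.star_apply, RCLike.star_def, map_div₀]
  field_simp
  ring

theorem isSchurInterpolable_iff_pickMatrix_posSemidef {n : ℕ} {lam z : Fin n → ℂ}
    (hlam : ∀ i, ‖lam i‖ < 1) (hinj : Function.Injective lam) :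
    IsSchurInterpolable lam z ↔ (pickMatrix lam z).PosSemidef := by
  induction n with
  | zero =>
    exact iff_of_true ⟨0, differentiableOn_const 0, finZeroElim, by simp⟩
      (Subsingleton.elim (pickMatrix lam z) 0 ▸ .zero)
  | succ n ih =>
    suffices h : (∀ i, ‖z i‖ ≤ 1) → (IsSchurInterpolable lam z ↔ (pickMatrix lam z).PosSemidef) from
      ⟨fun hφ => (h (hφ.norm_le_one hlam)).1 hφ,
        fun hP => (h (norm_le_one_of_pickMatrix_posSemidef hP hlam)).2 hP⟩
    intro hz
    rcases (hz 0).lt_or_eq with hz0 | hz0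
    · set lam' := mobius (lam 0) ∘ lam
      have hlam' i : ‖lam' i‖ < 1 := norm_mobius_lt_one (hlam 0) (hlam i)
      have hinj' : Function.Injective lam' := fun i j h => hinj <| by
        rw [← mobius_neg_mobius (hlam 0) (hlam i).le, ← mobius_neg_mobius (hlam 0) (hlam j).le]
        exact congrArg _ h
      have hne (i : Fin n) : lam' i.succ ≠ 0 := mobius_self (lam 0) ▸ hinj'.ne (Fin.succ_ne_zero i)
      rw [← isSchurInterpolable_mobius_comp_iff (hlam 0) hz0 (fun i => (hlam i).le) hz,
        ← pickMatrix_mobius_comp_posSemidef_iff (hlam 0) hz0 (fun i => (hlam i).le) hz,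
        isSchurInterpolable_iff_of_eq_zero (mobius_self _) (mobius_self _) hne,
        pickMatrix_posSemidef_iff_of_eq_zero hlam' (mobius_self _) (mobius_self _) hne]
      exact ih (fun i => hlam' i.succ) (hinj'.comp (Fin.succ_injective _))
    · rw [isSchurInterpolable_iff_forall_eq_of_norm_eq_one hlam hz0,
        pickMatrix_posSemidef_iff_forall_eq_of_norm_eq_one hlam hz0]

end NevanlinnaPick

theorem stmt0 (n : ℕ) (lam : Fin n → ℂ)
    (hmem : ∀ i, lam i ∈ ball (0 : ℂ) 1) (hinj : Function.Injective lam)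
    (z : Fin n → ℂ) :
    (∃ φ : ℂ → ℂ, DifferentiableOn ℂ φ (ball (0 : ℂ) 1) ∧
      (∀ i, φ (lam i) = z i) ∧ (∀ w ∈ ball (0 : ℂ) 1, ‖φ w‖ ≤ 1)) ↔
    (Matrix.of fun i j : Fin n =>
      (1 - z i * (starRingEnd ℂ) (z j)) / (1 - lam i * (starRingEnd ℂ) (lam j))).PosSemidef :=
  NevanlinnaPick.isSchurInterpolable_iff_pickMatrix_posSemidef
    (fun i => mem_ball_zero_iff.1 (hmem i)) hinj
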